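/- arXiv:1910.14633 — 4 statements merged into one kernel-verified Lean document; each statement's English description precedes it below -/
import Mathlib

section
/- For x → ∞: Σ_{n ≤ x} σ̃_1(n) = (2/3) x^{3/2} + O(x log x), where σ̃_1(n) = Σ_{d ∣ n, d² ≤ n} d. -/
/-!
Writing `n = d m` with `d ≤ m`, the sum counts each `d ≤ K = ⌊√N⌋` once for every `m` with
`d ≤ m ≤ N / d`, so it equals `∑_{d ≤ K} d (⌊N / d⌋ - d + 1)`. Replacing `d ⌊N / d⌋` by `N` costs
at most `K² ≤ N`, and the remaining polynomial `K N - (K³ - K) / 3` differs from `(2/3) N^{3/2}`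
by at most `√N`, since `t ↦ t N - t³ / 3` is flat at `t = √N` and `0 ≤ √N - K < 1`.
The error is thus even `O(x)`.
-/

open Filter Finset Asymptotics

/-- Iannucci's `σ̃₁`. -/
def sumSmallDivisors (n : ℕ) : ℕ := ∑ d ∈ n.divisors with d ^ 2 ≤ n, d

lemma card_filter_dvd_sq_le (N : ℕ) {d : ℕ} (hd : 0 < d) :
    #{n ∈ Icc 1 N | d ∣ n ∧ d ^ 2 ≤ n} = N / d + 1 - d := by
  have hmap : {n ∈ Icc 1 N | d ∣ n ∧ d ^ 2 ≤ n}
      = (Icc d (N / d)).map ⟨(d * ·), mul_right_injective₀ hd.ne'⟩ := by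
    ext n
    simp only [mem_filter, mem_Icc, Finset.mem_map, Function.Embedding.coeFn_mk]
    constructor
    · rintro ⟨⟨hn, hnN⟩, ⟨m, rfl⟩, hsq⟩
      refine ⟨m, ⟨?_, ?_⟩, rfl⟩
      · nlinarith
      · exact (Nat.le_div_iff_mul_le hd).2 (by linarith)
    · rintro ⟨m, ⟨hdm, hmN⟩, rfl⟩
      refine ⟨⟨by nlinarith, (Nat.le_div_iff_mul_le hd).1 hmN |>.trans' (by rw [mul_comm])⟩,
        dvd_mul_right d m, by nlinarith⟩
  rw [hmap, card_map, Nat.card_Icc]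

lemma sum_Icc_sumSmallDivisors (N : ℕ) :
    ∑ n ∈ Icc 1 N, sumSmallDivisors n = ∑ d ∈ Icc 1 N.sqrt, d * (N / d + 1 - d) := by
  unfold sumSmallDivisors
  rw [sum_comm' (t' := Icc 1 N.sqrt) (s' := fun d => {n ∈ Icc 1 N | d ∣ n ∧ d ^ 2 ≤ n})]
  · refine sum_congr rfl fun d hd => ?_
    rw [sum_const, card_filter_dvd_sq_le N (mem_Icc.1 hd).1, smul_eq_mul, mul_comm]
  · intro n d
    simp only [mem_filter, mem_Icc, Nat.mem_divisors, Nat.le_sqrt']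
    constructor
    · rintro ⟨⟨hn, hnN⟩, ⟨hdn, -⟩, hsq⟩
      exact ⟨⟨⟨hn, hnN⟩, hdn, hsq⟩, Nat.pos_of_dvd_of_pos hdn hn, hsq.trans hnN⟩
    · rintro ⟨⟨⟨hn, hnN⟩, hdn, hsq⟩, -⟩
      exact ⟨⟨hn, hnN⟩, ⟨hdn, by omega⟩, hsq⟩

lemma sum_Icc_mul_sub_one (K : ℕ) :
    ∑ d ∈ Icc 1 K, (d : ℝ) * (d - 1) = ((K : ℝ) ^ 3 - K) / 3 := by
  induction K with
  | zero => simp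
  | succ K ih =>
    rw [sum_Icc_succ_top (by omega), ih]
    push_cast
    ring

lemma abs_sub_mul_div_le (N : ℕ) {d : ℕ} (hd : 0 < d) : |(N : ℝ) - d * (N / d : ℕ)| ≤ d := by
  have hle : d * (N / d) ≤ N := Nat.mul_div_le N d
  have hlt : N < N / d * d + d := Nat.lt_div_mul_add hd
  rw [abs_le]
  constructor
  · have : (d : ℝ) * (N / d : ℕ) ≤ N := by exact_mod_cast hle
    linarith
  · have : (N : ℝ) < (N / d : ℕ) * d + d := by exact_mod_cast hlt
    linarith

lemma abs_sum_Icc_sumSmallDivisors_sub_le (N : ℕ) :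
    |∑ n ∈ Icc 1 N, (sumSmallDivisors n : ℝ) - (N.sqrt * N - ((N.sqrt : ℝ) ^ 3 - N.sqrt) / 3)|
      ≤ (N : ℝ) := by
  set K := N.sqrt
  have hterm : ∀ d ∈ Icc 1 K, ((d * (N / d + 1 - d) : ℕ) : ℝ)
      = (N - (d : ℝ) * (d - 1)) - (N - d * (N / d : ℕ)) := by
    intro d hd
    have hd := mem_Icc.1 hd
    have : d ≤ N / d := (Nat.le_div_iff_mul_le hd.1).2 (by nlinarith [Nat.le_sqrt'.1 hd.2])
    rw [Nat.cast_mul, Nat.cast_sub (by omega)]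
    push_cast
    ring
  calc |∑ n ∈ Icc 1 N, (sumSmallDivisors n : ℝ) - (K * N - ((K : ℝ) ^ 3 - K) / 3)|
    _ = |∑ d ∈ Icc 1 K, ((N : ℝ) - d * (N / d : ℕ))| := by
        rw [← Nat.cast_sum, sum_Icc_sumSmallDivisors, Nat.cast_sum, sum_congr rfl hterm,
          sum_sub_distrib, sum_sub_distrib, sum_Icc_mul_sub_one, sum_const, Nat.card_Icc,
          nsmul_eq_mul, ← abs_neg]
        push_cast
        ring_nf
    _ ≤ ∑ d ∈ Icc 1 K, |(N : ℝ) - d * (N / d : ℕ)| := abs_sum_le_sum_abs _ _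
    _ ≤ #(Icc 1 K) • (K : ℝ) := sum_le_card_nsmul _ _ _ fun d hd =>
        (abs_sub_mul_div_le N (mem_Icc.1 hd).1).trans (by exact_mod_cast (mem_Icc.1 hd).2)
    _ ≤ N := by
        rw [Nat.card_Icc, nsmul_eq_mul, Nat.add_sub_cancel]
        exact_mod_cast Nat.sqrt_le N

lemma abs_sqrt_mul_sub_cube_le (N : ℕ) :
    |(N.sqrt : ℝ) * N - ((N.sqrt : ℝ) ^ 3 - N.sqrt) / 3 - 2 / 3 * √N ^ 3| ≤ √N := by
  have hKN : (N.sqrt : ℝ) ^ 2 ≤ N := by exact_mod_cast Nat.sqrt_le' N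
  have hNK : (N : ℝ) < (N.sqrt + 1) ^ 2 := by exact_mod_cast Nat.lt_succ_sqrt' N
  set K : ℝ := (N.sqrt : ℝ)
  set r := √(N : ℝ)
  have hr : r ^ 2 = N := Real.sq_sqrt N.cast_nonneg
  have hKr : K ≤ r := Real.le_sqrt_of_sq_le hKN
  have hrK : r < K + 1 := (Real.sqrt_lt' (by positivity)).2 hNK
  have hK : 0 ≤ K := N.sqrt.cast_nonneg
  -- Taylor expansion of `t ↦ t N - t³ / 3` around `r = √N`, where its derivative vanishes
  have hexpand :
      K * N - (K ^ 3 - K) / 3 - 2 / 3 * r ^ 3 = K / 3 - (r - K) ^ 2 * (2 * r + K) / 3 := by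
    rw [← hr]; ring
  rw [hexpand, abs_le]
  constructor
  · have : (r - K) ^ 2 ≤ 1 := by nlinarith
    nlinarith
  · nlinarith [sq_nonneg (r - K)]

lemma sqrt_pow_three_sub_le {x y : ℝ} (hy : 0 ≤ y) (hyx : y ≤ x) (hxy : x ≤ y + 1) :
    √x ^ 3 - √y ^ 3 ≤ 2 * √x := by
  have hx2 : √x ^ 2 = x := Real.sq_sqrt (hy.trans hyx)
  have hy2 : √y ^ 2 = y := Real.sq_sqrt hy
  have hmono : √y ≤ √x := Real.sqrt_le_sqrt hyx
  have hy0 : 0 ≤ √y := Real.sqrt_nonneg y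
  nlinarith [mul_nonneg (sub_nonneg.2 hmono) hy0]

lemma rpow_three_halves {x : ℝ} (hx : 0 ≤ x) : x ^ ((3 : ℝ) / 2) = √x ^ 3 := by
  rw [Real.rpow_div_two_eq_sqrt _ hx]
  norm_cast

lemma abs_sum_Icc_floor_sumSmallDivisors_sub_le {x : ℝ} (hx : 1 ≤ x) :
    |∑ n ∈ Icc 1 ⌊x⌋₊, (sumSmallDivisors n : ℝ) - 2 / 3 * x ^ ((3 : ℝ) / 2)| ≤ 4 * x := by
  set N := ⌊x⌋₊
  have hNx : (N : ℝ) ≤ x := Nat.floor_le (by linarith)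
  have hxN : x ≤ N + 1 := (Nat.lt_floor_add_one x).le
  have hsqrtN : √(N : ℝ) ≤ x := (Real.sqrt_le_sqrt hNx).trans (Real.sqrt_le_self_iff.2 (.inr hx))
  have hsqrtx : √x ≤ x := Real.sqrt_le_self_iff.2 (.inr hx)
  have hcube := sqrt_pow_three_sub_le N.cast_nonneg hNx hxN
  have hcube' : √(N : ℝ) ^ 3 ≤ √x ^ 3 := by gcongr
  have hsum := abs_le.1 (abs_sum_Icc_sumSmallDivisors_sub_le N)
  have hmain := abs_le.1 (abs_sqrt_mul_sub_cube_le N)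
  rw [rpow_three_halves (by linarith), abs_le]
  constructor <;> linarith [hsum.1, hsum.2, hmain.1, hmain.2]

theorem isBigO_sum_Icc_floor_sumSmallDivisors_sub :
    (fun x : ℝ => ∑ n ∈ Icc 1 ⌊x⌋₊, (sumSmallDivisors n : ℝ) - 2 / 3 * x ^ ((3 : ℝ) / 2))
      =O[atTop] fun x => x :=
  IsBigO.of_bound 4 <| (eventually_ge_atTop 1).mono fun x hx => by
    rw [Real.norm_eq_abs, Real.norm_of_nonneg (by linarith)]
    exact abs_sum_Icc_floor_sumSmallDivisors_sub_le hx

theorem stmt_6 :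
    (fun x : ℝ =>
        (∑ n ∈ Finset.Icc 1 ⌊x⌋₊,
            ∑ d ∈ n.divisors.filter (fun d => d ^ 2 ≤ n), (d : ℝ)) -
          (2 / 3) * x ^ ((3 : ℝ) / 2)) =O[atTop]
      fun x : ℝ => x * Real.log x := by
  have hx_log : (fun x : ℝ => x) =O[atTop] fun x => x * Real.log x := by
    simpa using
      (isBigO_refl (fun x : ℝ => x) atTop).mul (Real.isLittleO_const_log_atTop (c := 1)).isBigO
  simpa [sumSmallDivisors] using isBigO_sum_Icc_floor_sumSmallDivisors_sub.trans hx_log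
end

section
/- Suppose that for all ε > 0 one has G_1(x) := Σ_{d ≤ √x} ψ(x/d) ≪_ε x^{1/4+ε}, where ψ(t) = t - ⌊t⌋ - 1/2. Then for all ε > 0 and x → ∞: Σ_{n ≤ x} τ̃(n) = (1/2) x log x + (γ - 1/2) x + (1/2) x^{1/2} + O_ε(x^{1/4+ε}). -/
open Filter

noncomputable def psi (t : ℝ) : ℝ := t - (⌊t⌋ : ℝ) - 1 / 2

/-!
Counting the pairs `d ∣ n`, `d² ≤ n ≤ x` by `d` first gives, with `D = ⌊√x⌋`,
`∑_{n ≤ x} τ̃(n) = ∑_{d ≤ D} (⌊x/d⌋ - d + 1) = x H_D - ∑_{d ≤ D} ψ(x/d) - D²/2`.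
The expansion `H_D = log D + γ + 1/(2D) + O(D⁻²)` (the trapezoid rule for `∫ dt/t`) costs `O(1)`
after multiplication by `x ≍ D²`, and so does replacing `log D, D` by `log √x, √x`, because
`√x - D ∈ [0, 1)`. Hence the error term is the `ψ`-sum up to `O(1)`.
-/

section

open Finset Real Topology

theorem card_filter_dvd_and_sq_le {N d : ℕ} (hd : 0 < d) :
    #{n ∈ Icc 1 N | d ∣ n ∧ d ^ 2 ≤ n} = N / d + 1 - d := by
  have himage : {n ∈ Icc 1 N | d ∣ n ∧ d ^ 2 ≤ n} = (Icc d (N / d)).image (d * ·) := by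
    ext n
    simp only [mem_filter, mem_Icc, mem_image, Nat.le_div_iff_mul_le hd]
    constructor
    · rintro ⟨⟨-, hnN⟩, ⟨k, rfl⟩, hdk⟩
      exact ⟨k, ⟨Nat.le_of_mul_le_mul_left (by nlinarith) hd, by linarith⟩, rfl⟩
    · rintro ⟨k, ⟨hdk, hkN⟩, rfl⟩
      exact ⟨⟨by nlinarith, by linarith⟩, dvd_mul_right d k, by nlinarith⟩
  rw [himage, card_image_of_injective _ (mul_right_injective₀ hd.ne'), Nat.card_Icc]

theorem sum_card_filter_sq_le_divisors (N : ℕ) :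
    ∑ n ∈ Icc 1 N, #{d ∈ n.divisors | d ^ 2 ≤ n} = ∑ d ∈ Icc 1 N.sqrt, (N / d + 1 - d) := by
  calc ∑ n ∈ Icc 1 N, #{d ∈ n.divisors | d ^ 2 ≤ n}
      = ∑ d ∈ Icc 1 N.sqrt, #{n ∈ Icc 1 N | d ∣ n ∧ d ^ 2 ≤ n} := by
        simp only [card_eq_sum_ones]
        refine sum_comm' fun n d => ?_
        simp only [mem_filter, mem_Icc, Nat.mem_divisors, Nat.le_sqrt']
        constructor
        · rintro ⟨⟨hn, hnN⟩, ⟨hdn, -⟩, hdsq⟩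
          exact ⟨⟨⟨hn, hnN⟩, hdn, hdsq⟩, Nat.pos_of_dvd_of_pos hdn hn, hdsq.trans hnN⟩
        · rintro ⟨⟨⟨hn, hnN⟩, hdn, hdsq⟩, -⟩
          exact ⟨⟨hn, hnN⟩, ⟨hdn, by omega⟩, hdsq⟩
    _ = ∑ d ∈ Icc 1 N.sqrt, (N / d + 1 - d) := sum_congr rfl fun d hd =>
        card_filter_dvd_and_sq_le (mem_Icc.1 hd).1

theorem natFloor_eq_sub_psi {t : ℝ} (ht : 0 ≤ t) : (⌊t⌋₊ : ℝ) = t - psi t - 1 / 2 := by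
  rw [psi, natCast_floor_eq_intCast_floor ht]
  ring

theorem natFloor_sqrt_eq_sqrt_natFloor {x : ℝ} (hx : 0 ≤ x) : ⌊√x⌋₊ = ⌊x⌋₊.sqrt :=
  eq_of_forall_le_iff fun k => by
    rw [Nat.le_sqrt', Nat.le_floor_iff (sqrt_nonneg x), Nat.le_floor_iff hx,
      le_sqrt (Nat.cast_nonneg k) hx]
    push_cast
    rfl

theorem sum_Icc_natCast_sub_half (D : ℕ) : ∑ d ∈ Icc 1 D, ((d : ℝ) - 1 / 2) = (D : ℝ) ^ 2 / 2 := by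
  induction D with
  | zero => simp
  | succ D ih =>
    rw [sum_Icc_succ_top (by omega), ih]
    push_cast
    ring

theorem sum_card_filter_sq_le_divisors_eq {x : ℝ} (hx : 0 ≤ x) :
    ∑ n ∈ Icc 1 ⌊x⌋₊, (#{d ∈ n.divisors | d ^ 2 ≤ n} : ℝ) =
      x * harmonic ⌊√x⌋₊ - ∑ d ∈ Icc 1 ⌊√x⌋₊, psi (x / d) - (⌊√x⌋₊ : ℝ) ^ 2 / 2 := by
  have hterm : ∀ d ∈ Icc 1 ⌊x⌋₊.sqrt, ((⌊x⌋₊ / d + 1 - d : ℕ) : ℝ) =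
      x * (d : ℝ)⁻¹ - psi (x / d) - ((d : ℝ) - 1 / 2) := fun d hd => by
    obtain ⟨hd, hdD⟩ := mem_Icc.1 hd
    have hdN : d ≤ ⌊x⌋₊ / d := by
      rw [Nat.le_div_iff_mul_le hd, ← sq]
      exact Nat.le_sqrt'.1 hdD
    rw [Nat.cast_sub (by omega), Nat.cast_add, ← Nat.floor_div_natCast,
      natFloor_eq_sub_psi (by positivity), div_eq_mul_inv]
    push_cast
    ring
  rw [← Nat.cast_sum, sum_card_filter_sq_le_divisors, Nat.cast_sum,
    natFloor_sqrt_eq_sqrt_natFloor hx, sum_congr rfl hterm, sum_sub_distrib, sum_sub_distrib,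
    ← mul_sum, sum_Icc_natCast_sub_half, harmonic_eq_sum_Icc]
  push_cast
  rfl

theorem abs_sub_le_of_tendsto_of_abs_sub_succ_le {f g : ℕ → ℝ} {L : ℝ} {n₀ : ℕ}
    (hf : Tendsto f atTop (𝓝 L)) (hg : ∀ n, 0 ≤ g n)
    (hstep : ∀ n, n₀ ≤ n → |f (n + 1) - f n| ≤ g n - g (n + 1)) : |L - f n₀| ≤ g n₀ := by
  have htele : ∀ n, n₀ ≤ n → |f n - f n₀| ≤ g n₀ - g n := by
    intro n hn
    induction n, hn using Nat.le_induction with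
    | base => simp
    | succ n hn ih =>
      calc |f (n + 1) - f n₀| ≤ |f (n + 1) - f n| + |f n - f n₀| := abs_sub_le _ _ _
        _ ≤ g n₀ - g (n + 1) := by linarith [hstep n hn]
  refine le_of_tendsto ((hf.sub_const (f n₀)).abs) ?_
  filter_upwards [eventually_ge_atTop n₀] with n hn
  linarith [htele n hn, hg n]

theorem abs_log_one_add_sub_trapezoid_le {u : ℝ} (hu : 0 < u) (hu' : u ≤ 1 / 2) :
    |u / 2 + u / (2 * (1 + u)) - log (1 + u)| ≤ 3 * u ^ 3 := by
  have htaylor : |log (1 + u) - u + u ^ 2 / 2| ≤ 2 * u ^ 3 := by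
    have h := abs_log_sub_add_sum_range_le (x := -u) (by rw [abs_neg, abs_of_pos hu]; linarith) 2
    simp only [sum_range_succ, sum_range_zero, abs_neg, abs_of_pos hu,
      sub_neg_eq_add] at h
    calc |log (1 + u) - u + u ^ 2 / 2| = |0 + (-u) ^ (0 + 1) / ((0 : ℕ) + 1 : ℝ) +
          (-u) ^ (1 + 1) / ((1 : ℕ) + 1 : ℝ) + log (1 + u)| := by
          congr 1; push_cast; ring
      _ ≤ u ^ 3 / (1 - u) := h
      _ ≤ 2 * u ^ 3 := by
          rw [div_le_iff₀ (by linarith)]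
          nlinarith [pow_pos hu 3]
  have hcubic : |u ^ 3 / (2 * (1 + u))| ≤ u ^ 3 := by
    rw [abs_of_pos (by positivity), div_le_iff₀ (by positivity)]
    nlinarith [pow_pos hu 3]
  calc |u / 2 + u / (2 * (1 + u)) - log (1 + u)|
      = |-(log (1 + u) - u + u ^ 2 / 2) + u ^ 3 / (2 * (1 + u))| := by
        congr 1; field_simp; ring
    _ ≤ |log (1 + u) - u + u ^ 2 / 2| + |u ^ 3 / (2 * (1 + u))| := by
        rw [← abs_neg (log (1 + u) - u + u ^ 2 / 2)]; exact abs_add_le _ _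
    _ ≤ 3 * u ^ 3 := by linarith

theorem abs_harmonic_sub_log_sub_inv_sub_eulerMascheroni_le {n : ℕ} (hn : 2 ≤ n) :
    |harmonic n - log n - 1 / (2 * n) - eulerMascheroniConstant| ≤ 6 / (n : ℝ) ^ 2 := by
  set f : ℕ → ℝ := fun m => harmonic m - log m - 1 / (2 * m)
  have hf : Tendsto f atTop (𝓝 eulerMascheroniConstant) := by
    have hinv : Tendsto (fun m : ℕ => 1 / (2 * (m : ℝ))) atTop (𝓝 0) :=
      tendsto_const_nhds.div_atTop (tendsto_natCast_atTop_atTop.const_mul_atTop two_pos)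
    simpa only [sub_zero] using tendsto_harmonic_sub_log.sub hinv
  set g : ℕ → ℝ := fun m => 3 / (2 * ((m : ℝ) - 1) ^ 2)
  have hstep : ∀ m, n ≤ m → |f (m + 1) - f m| ≤ g m - g (m + 1) := by
    intro m hm
    have hm2 : (2 : ℝ) ≤ m := by exact_mod_cast hn.trans hm
    have hm0 : (0 : ℝ) < m := by linarith
    have hdiff :
        f (m + 1) - f m = (1 / m) / 2 + (1 / m) / (2 * (1 + 1 / m)) - log (1 + 1 / m) := by
      simp only [f, harmonic_succ]
      rw [show (1 : ℝ) + 1 / m = (m + 1) / m by field_simp, log_div (by positivity) hm0.ne']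
      push_cast
      field_simp
      ring
    rw [hdiff]
    refine (abs_log_one_add_sub_trapezoid_le (by positivity) ?_).trans ?_
    · rw [div_le_div_iff₀ (by positivity) two_pos]; linarith
    · have hm1 : (0 : ℝ) < m - 1 := by linarith
      have htele : g m - g (m + 1) = 3 * (2 * m - 1) / (2 * m ^ 2 * (m - 1) ^ 2) := by
        simp only [g, Nat.cast_add_one, add_sub_cancel_right]
        field_simp
        ring
      rw [htele, div_pow, one_pow, mul_one_div, div_le_div_iff₀ (by positivity) (by positivity)]
      nlinarith [mul_pos hm0 hm1, pow_pos hm0 3]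
  have hg : ∀ m, 0 ≤ g m := fun m => by positivity
  have hn2 : (2 : ℝ) ≤ n := by exact_mod_cast hn
  calc |harmonic n - log n - 1 / (2 * n) - eulerMascheroniConstant|
      = |eulerMascheroniConstant - f n| := abs_sub_comm _ _
    _ ≤ g n := abs_sub_le_of_tendsto_of_abs_sub_succ_le hf hg hstep
    _ ≤ 6 / (n : ℝ) ^ 2 := by
        rw [div_le_div_iff₀ (by nlinarith) (by positivity)]
        nlinarith

-- With `s = √x`, `t = ⌊√x⌋` this is the part of the error free of `γ` and `ψ`.
theorem abs_sq_mul_log_div_add_sq_div_sub_le {s t : ℝ} (ht : 1 ≤ t) (hts : t ≤ s)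
    (hst : s < t + 1) :
    |s ^ 2 * log (t / s) + s ^ 2 / (2 * t) + s ^ 2 / 2 - t ^ 2 / 2 - s / 2| ≤ 2 := by
  have hs : 0 < s := by linarith
  have ht0 : 0 < t := by linarith
  have hlog_le : log (t / s) ≤ t / s - 1 := log_le_sub_one_of_pos (by positivity)
  have hlog_ge : 1 - (t / s)⁻¹ ≤ log (t / s) := one_sub_inv_le_log_of_pos (by positivity)
  have hA_le : s ^ 2 * log (t / s) + s ^ 2 - s * t ≤ 0 := by
    have := mul_le_mul_of_nonneg_left hlog_le (sq_nonneg s)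
    have e : s ^ 2 * (t / s - 1) = s * t - s ^ 2 := by field_simp
    linarith
  have hA_ge : -2 ≤ s ^ 2 * log (t / s) + s ^ 2 - s * t := by
    have := mul_le_mul_of_nonneg_left hlog_ge (sq_nonneg s)
    have e : s ^ 2 * (1 - (t / s)⁻¹) + s ^ 2 - s * t = -(s * (s - t) ^ 2 / t) := by
      field_simp; ring
    have hb : s * (s - t) ^ 2 / t ≤ 2 := by
      have hsq : (s - t) ^ 2 ≤ 1 := by nlinarith
      rw [div_le_iff₀ ht0]
      nlinarith [mul_le_mul_of_nonneg_left hsq hs.le]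
    linarith
  have hB : s ^ 2 / (2 * t) + s ^ 2 / 2 - t ^ 2 / 2 - s / 2 - (s ^ 2 - s * t) =
      (s - t) / 2 + (s - t) ^ 2 / (2 * t) - (s - t) ^ 2 / 2 := by
    field_simp; ring
  have hB_ge : 0 ≤ (s - t) / 2 + (s - t) ^ 2 / (2 * t) - (s - t) ^ 2 / 2 := by
    have : 0 ≤ (s - t) ^ 2 / (2 * t) := by positivity
    nlinarith
  have hB_le : (s - t) / 2 + (s - t) ^ 2 / (2 * t) - (s - t) ^ 2 / 2 ≤ 1 := by
    have : (s - t) ^ 2 / (2 * t) ≤ 1 / 2 := by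
      rw [div_le_iff₀ (by positivity)]; nlinarith
    nlinarith
  rw [abs_le]
  constructor <;> linarith

theorem abs_sum_card_filter_sq_le_divisors_sub_add_sum_psi_le {x : ℝ} (hx : 4 ≤ x) :
    |∑ n ∈ Icc 1 ⌊x⌋₊, (#{d ∈ n.divisors | d ^ 2 ≤ n} : ℝ) -
        (1 / 2 * x * log x + (eulerMascheroniConstant - 1 / 2) * x + 1 / 2 * x ^ ((1 : ℝ) / 2)) +
        ∑ d ∈ Icc 1 ⌊√x⌋₊, psi (x / d)| ≤ 26 := by
  rw [sum_card_filter_sq_le_divisors_eq (by linarith), ← sqrt_eq_rpow]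
  set s := √x
  set D := ⌊s⌋₊
  have hx0 : 0 < x := by linarith
  have hxs : x = s ^ 2 := (sq_sqrt hx0.le).symm
  have hs2 : 2 ≤ s := le_sqrt_of_sq_le (by linarith)
  have hD2 : 2 ≤ D := Nat.le_floor (by exact_mod_cast hs2)
  have hDs : (D : ℝ) ≤ s := Nat.floor_le (by linarith)
  have hsD : s < D + 1 := Nat.lt_floor_add_one s
  have hsplit : x * harmonic D - ∑ d ∈ Icc 1 D, psi (x / d) - (D : ℝ) ^ 2 / 2 -
        (1 / 2 * x * log x + (eulerMascheroniConstant - 1 / 2) * x + 1 / 2 * s) +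
        ∑ d ∈ Icc 1 D, psi (x / d) =
      x * (harmonic D - log D - 1 / (2 * D) - eulerMascheroniConstant) +
        (s ^ 2 * log (D / s) + s ^ 2 / (2 * D) + s ^ 2 / 2 - (D : ℝ) ^ 2 / 2 - s / 2) := by
    rw [log_div (by positivity) (by positivity), hxs, log_pow]
    field_simp
    ring
  have hharmonic : |x * (harmonic D - log D - 1 / (2 * D) - eulerMascheroniConstant)| ≤ 24 := by
    rw [abs_mul, abs_of_pos hx0]
    calc x * |harmonic D - log D - 1 / (2 * D) - eulerMascheroniConstant|
        ≤ 4 * (D : ℝ) ^ 2 * (6 / (D : ℝ) ^ 2) :=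
          mul_le_mul (by nlinarith) (abs_harmonic_sub_log_sub_inv_sub_eulerMascheroni_le hD2)
            (abs_nonneg _) (by positivity)
      _ = 24 := by field_simp; ring
  rw [hsplit]
  linarith [abs_add_le (x * (harmonic D - log D - 1 / (2 * D) - eulerMascheroniConstant))
    (s ^ 2 * log (D / s) + s ^ 2 / (2 * D) + s ^ 2 / 2 - (D : ℝ) ^ 2 / 2 - s / 2),
    abs_sq_mul_log_div_add_sq_div_sub_le (by linarith) hDs hsD]

end

theorem stmt_7
    (h : ∀ ε : ℝ, 0 < ε →
      (fun x : ℝ => ∑ d ∈ Finset.Icc 1 ⌊Real.sqrt x⌋₊, psi (x / (d : ℝ))) =O[atTop]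
        fun x : ℝ => x ^ ((1 : ℝ) / 4 + ε)) :
    ∀ ε : ℝ, 0 < ε →
      (fun x : ℝ =>
          (∑ n ∈ Finset.Icc 1 ⌊x⌋₊, ((n.divisors.filter (fun d => d ^ 2 ≤ n)).card : ℝ)) -
            ((1 / 2) * x * Real.log x + (Real.eulerMascheroniConstant - 1 / 2) * x +
              (1 / 2) * x ^ ((1 : ℝ) / 2))) =O[atTop]
        fun x : ℝ => x ^ ((1 : ℝ) / 4 + ε) := by
  intro ε hε
  have hone : (fun _ : ℝ => (1 : ℝ)) =O[atTop] fun x : ℝ => x ^ ((1 : ℝ) / 4 + ε) :=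
    ((Asymptotics.isLittleO_one_left_iff ℝ).2
      (tendsto_norm_atTop_atTop.comp (tendsto_rpow_atTop (by positivity)))).isBigO
  have hremainder : (fun x : ℝ =>
      (∑ n ∈ Finset.Icc 1 ⌊x⌋₊, ((n.divisors.filter (fun d => d ^ 2 ≤ n)).card : ℝ)) -
        ((1 / 2) * x * Real.log x + (Real.eulerMascheroniConstant - 1 / 2) * x +
          (1 / 2) * x ^ ((1 : ℝ) / 2)) +
        ∑ d ∈ Finset.Icc 1 ⌊Real.sqrt x⌋₊, psi (x / (d : ℝ))) =O[atTop] fun _ => (1 : ℝ) :=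
    Asymptotics.IsBigO.of_bound 26 <| (eventually_ge_atTop 4).mono fun x hx => by
      simpa using abs_sum_card_filter_sq_le_divisors_sub_add_sum_psi_le hx
  simpa using (hremainder.trans hone).sub (h ε hε)
end

section
/- For every integer a ≥ 3 and x → ∞: Σ_{n ≤ x} τ_a(n) = (1/a) x log x + (γ - 1/a) x + O(x^{1 - 2/a} + x^{2/3 + ε}), where τ_a(n) is the number of divisors d of n with d^a ≤ n. -/
/-!
Counting the pairs `(d, m)` with `n = d * m ≤ x` and `d ^ (a - 1) ≤ m` gives
`∑_{n ≤ x} τ_a(n) = ∑_{d ≤ N} (⌊x / d⌋ + 1 - d ^ (a - 1))` with `N = ⌊x ^ (1 / a)⌋`, that is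
`x H_N - ∑_{d ≤ N} {x / d} + N - ∑_{d ≤ N} d ^ (a - 1)`.
Insert `H_N = log N + γ + 1 / (2N) + O(N⁻²)` (telescoping the trapezoidal rule for `∫ dt / t`)
and Faulhaber's formula `∑_{d ≤ N} d ^ (a - 1) = N ^ a / a + N ^ (a - 1) / 2 + O(N ^ (a - 2))`.
With `y = x ^ (1 / a)`, what is left besides these errors is `x log (N / y) + (x - N ^ a) / a`
and `(x - N ^ a) / (2N)`; both are `O(y ^ (a - 2))` because `0 ≤ y - N < 1` and
`t ↦ log t + (1 - t ^ a) / a` vanishes to second order at `t = 1`.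
The fractional parts cost `O(N) = O(x ^ (1 / a))`, which is `O(x ^ (2 / 3 + ε))` as `a ≥ 3`.
-/

open Filter Finset Real Topology

theorem card_filter_dvd_pow_le {a d : ℕ} (ha : a ≠ 0) (hd : 0 < d) (X : ℕ) :
    #{n ∈ Icc 1 X | d ∣ n ∧ d ^ a ≤ n} = X / d + 1 - d ^ (a - 1) := by
  have hpow : d ^ a = d * d ^ (a - 1) := (mul_pow_sub_one ha d).symm
  have himage :
      {n ∈ Icc 1 X | d ∣ n ∧ d ^ a ≤ n} = (Icc (d ^ (a - 1)) (X / d)).image (d * ·) := by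
    ext n
    simp only [mem_filter, mem_Icc, Finset.mem_image]
    constructor
    · rintro ⟨⟨-, hnX⟩, ⟨m, rfl⟩, hm⟩
      refine ⟨m, ⟨?_, ?_⟩, rfl⟩
      · rw [hpow] at hm
        exact Nat.le_of_mul_le_mul_left hm hd
      · rw [Nat.le_div_iff_mul_le hd]
        linarith
    · rintro ⟨m, ⟨hm, hmX⟩, rfl⟩
      have : 1 ≤ d ^ (a - 1) := Nat.one_le_pow _ _ hd
      rw [Nat.le_div_iff_mul_le hd] at hmX
      exact ⟨⟨by nlinarith, by linarith⟩, dvd_mul_right d m, hpow ▸ Nat.mul_le_mul_left d hm⟩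
  rw [himage, card_image_of_injective _ (mul_right_injective₀ hd.ne'), Nat.card_Icc]

theorem sum_card_filter_divisors_pow_le {a X N : ℕ} (ha : a ≠ 0) (hN : ∀ d, d ^ a ≤ X ↔ d ≤ N) :
    ∑ n ∈ Icc 1 X, #{d ∈ n.divisors | d ^ a ≤ n} = ∑ d ∈ Icc 1 N, (X / d + 1 - d ^ (a - 1)) := by
  have hfilter : ∀ n ∈ Icc 1 X, {d ∈ n.divisors | d ^ a ≤ n} =
      (Icc 1 N).bipartiteAbove (fun n d => d ∣ n ∧ d ^ a ≤ n) n := by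
    intro n hn
    rw [mem_Icc] at hn
    ext d
    simp only [bipartiteAbove, mem_filter, Nat.mem_divisors, mem_Icc]
    constructor
    · rintro ⟨⟨hdn, -⟩, hda⟩
      exact ⟨⟨Nat.pos_of_dvd_of_pos hdn hn.1, (hN d).1 (hda.trans hn.2)⟩, hdn, hda⟩
    · rintro ⟨-, hdn, hda⟩
      exact ⟨⟨hdn, by omega⟩, hda⟩
  rw [sum_congr rfl fun n hn => congrArg card (hfilter n hn),
    sum_card_bipartiteAbove_eq_sum_card_bipartiteBelow]
  exact sum_congr rfl fun d hd => card_filter_dvd_pow_le ha (mem_Icc.1 hd).1 X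

theorem sum_card_filter_divisors_pow_le_floor_pow {a : ℕ} (ha : a ≠ 0) {y : ℝ} (hy : 0 ≤ y) :
    ∑ n ∈ Icc 1 ⌊y ^ a⌋₊, (#{d ∈ n.divisors | d ^ a ≤ n} : ℝ) =
      y ^ a * ∑ d ∈ Icc 1 ⌊y⌋₊, (d : ℝ)⁻¹ - ∑ d ∈ Icc 1 ⌊y⌋₊, (y ^ a / d - ⌊y ^ a / d⌋₊) +
        ⌊y⌋₊ - ∑ d ∈ Icc 1 ⌊y⌋₊, (d : ℝ) ^ (a - 1) := by
  have hN : ∀ d : ℕ, d ^ a ≤ ⌊y ^ a⌋₊ ↔ d ≤ ⌊y⌋₊ := fun d => by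
    rw [Nat.le_floor_iff (by positivity), Nat.le_floor_iff hy]
    push_cast
    exact pow_le_pow_iff_left₀ d.cast_nonneg hy ha
  have hterm : ∀ d ∈ Icc 1 ⌊y⌋₊, ((⌊y ^ a⌋₊ / d + 1 - d ^ (a - 1) : ℕ) : ℝ) =
      y ^ a * (d : ℝ)⁻¹ - (y ^ a / d - ⌊y ^ a / d⌋₊) + 1 - (d : ℝ) ^ (a - 1) := by
    intro d hd
    obtain ⟨hd1, hdN⟩ := mem_Icc.1 hd
    have hle : d ^ (a - 1) ≤ ⌊y ^ a⌋₊ / d := by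
      rw [Nat.le_div_iff_mul_le hd1, pow_sub_one_mul ha]
      exact (hN d).2 hdN
    rw [Nat.cast_sub (by omega), ← Nat.floor_div_natCast]
    push_cast
    ring
  rw [← Nat.cast_sum, sum_card_filter_divisors_pow_le ha hN, Nat.cast_sum, sum_congr rfl hterm]
  simp only [sum_sub_distrib, sum_add_distrib, mul_sum, sum_const, Nat.card_Icc, nsmul_eq_mul,
    mul_one, add_tsub_cancel_right]

theorem abs_sub_sum_div_sub_floor_div_le {x : ℝ} (hx : 0 ≤ x) (N : ℕ) :
    |N - ∑ d ∈ Icc 1 N, (x / d - ⌊x / d⌋₊)| ≤ N := by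
  have hnonneg : 0 ≤ ∑ d ∈ Icc 1 N, (x / d - ⌊x / d⌋₊) :=
    sum_nonneg fun d _ => sub_nonneg.2 (Nat.floor_le (by positivity))
  have hle : ∑ d ∈ Icc 1 N, (x / d - ⌊x / d⌋₊) ≤ N := by
    calc _ ≤ ∑ _d ∈ Icc 1 N, (1 : ℝ) :=
          sum_le_sum fun d _ => by linarith [Nat.lt_floor_add_one (x / d)]
      _ = N := by simp
  rw [abs_le]
  constructor <;> linarith

theorem abs_sub_le_of_abs_sub_succ_le {u w : ℕ → ℝ} {L : ℝ} {n : ℕ}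
    (hu : Tendsto u atTop (𝓝 L)) (hw : ∀ k ≥ n, 0 ≤ w k)
    (h : ∀ k ≥ n, |u (k + 1) - u k| ≤ w k - w (k + 1)) : |u n - L| ≤ w n := by
  have htel : ∀ m ≥ n, |u m - u n| ≤ w n - w m := by
    intro m hm
    induction m, hm using Nat.le_induction with
    | base => simp
    | succ m hm ih =>
      calc |u (m + 1) - u n| ≤ |u (m + 1) - u m| + |u m - u n| := abs_sub_le _ _ _
        _ ≤ w n - w (m + 1) := by linarith [h m hm]
  rw [abs_sub_comm]
  refine le_of_tendsto ((hu.sub_const _).abs) ?_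
  filter_upwards [eventually_ge_atTop n] with m hm
  linarith [htel m hm, hw m hm]

theorem abs_log_add_one_sub_log_sub_le {k : ℝ} (hk : 2 ≤ k) :
    |log (k + 1) - log k - (1 / (2 * k) + 1 / (2 * (k + 1)))| ≤ 3 / k ^ 2 - 3 / (k + 1) ^ 2 := by
  have hk0 : 0 < k := by linarith
  have hk1 : 0 < k - 1 := by linarith
  have hz : |-k⁻¹| < 1 := by
    rw [abs_neg, abs_of_pos (inv_pos.2 hk0)]
    exact inv_lt_one_of_one_lt₀ (by linarith)
  have htaylor : |log (k + 1) - log k - (k⁻¹ - k⁻¹ ^ 2 / 2)| ≤ 1 / (k ^ 2 * (k - 1)) := by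
    have h := abs_log_sub_add_sum_range_le hz 2
    have hlog : log (1 - -k⁻¹) = log (k + 1) - log k := by
      rw [← log_div (by positivity) hk0.ne']
      congr 1
      field_simp
      ring
    rw [abs_neg, abs_of_pos (inv_pos.2 hk0), hlog] at h
    convert h using 1
    · congr 1
      simp only [sum_range_succ, sum_range_zero]
      push_cast
      ring
    · rw [show 2 + 1 = 3 from rfl]
      field_simp
  have htrap :
      1 / (2 * k) + 1 / (2 * (k + 1)) = k⁻¹ - k⁻¹ ^ 2 / 2 + 1 / (2 * k ^ 2 * (k + 1)) := by
    field_simp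
    ring
  have hgap : 3 / k ^ 2 - 3 / (k + 1) ^ 2 - (1 / (k ^ 2 * (k - 1)) + 1 / (2 * k ^ 2 * (k + 1))) =
      (9 * k ^ 2 - 10 * k - 7) / (2 * k ^ 2 * (k - 1) * (k + 1) ^ 2) := by
    field_simp
    ring
  have hgap_nonneg : 0 ≤ (9 * k ^ 2 - 10 * k - 7) / (2 * k ^ 2 * (k - 1) * (k + 1) ^ 2) :=
    div_nonneg (by nlinarith) (by positivity)
  have hpos : 0 < 1 / (2 * k ^ 2 * (k + 1)) := by positivity
  rw [htrap, abs_le]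
  rw [abs_le] at htaylor
  constructor <;> linarith [htaylor.1, htaylor.2]

theorem abs_harmonic_sub_log_sub_eulerMascheroniConstant_le {n : ℕ} (hn : 2 ≤ n) :
    |harmonic n - log n - eulerMascheroniConstant - 1 / (2 * n)| ≤ 3 / n ^ 2 := by
  set u : ℕ → ℝ := fun k => harmonic k - log k - 1 / (2 * k)
  have hu : Tendsto u atTop (𝓝 eulerMascheroniConstant) := by
    have h : Tendsto (fun k : ℕ => 1 / (2 * (k : ℝ))) atTop (𝓝 0) :=
      tendsto_const_nhds.div_atTop (tendsto_natCast_atTop_atTop.const_mul_atTop two_pos)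
    simpa only [sub_zero] using tendsto_harmonic_sub_log.sub h
  have hstep : ∀ k ≥ n, |u (k + 1) - u k| ≤ 3 / (k : ℝ) ^ 2 - 3 / ((k + 1 : ℕ) : ℝ) ^ 2 := by
    intro k hk
    have hk2 : (2 : ℝ) ≤ k := by exact_mod_cast hn.trans hk
    have hu_succ :
        u (k + 1) - u k = -(log (k + 1) - log k - (1 / (2 * k) + 1 / (2 * (k + 1)))) := by
      simp only [u, harmonic_succ]
      push_cast
      field_simp
      ring
    rw [hu_succ, abs_neg, Nat.cast_succ]
    exact abs_log_add_one_sub_log_sub_le hk2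
  have h := abs_sub_le_of_abs_sub_succ_le hu (fun k _ => by positivity) hstep
  convert h using 2
  ring

theorem exists_abs_sum_Icc_pow_sub_le (q : ℕ) : ∃ C ≥ 0, ∀ N : ℕ, 1 ≤ N →
    |∑ d ∈ Icc 1 N, (d : ℝ) ^ (q + 1) - ((N : ℝ) ^ (q + 2) / (q + 2) + (N : ℝ) ^ (q + 1) / 2)| ≤
      C * (N : ℝ) ^ q := by
  set c : ℕ → ℝ := fun i => bernoulli' (i + 2) * (q + 2).choose (i + 2) / (q + 2)
  refine ⟨∑ i ∈ range q, |c i|, sum_nonneg fun i _ => abs_nonneg _, fun N hN => ?_⟩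
  have hfaulhaber := sum_Ico_pow N (q + 1)
  rw [sum_range_succ', sum_range_succ'] at hfaulhaber
  have hsum : ∑ d ∈ Icc 1 N, (d : ℝ) ^ (q + 1) -
      ((N : ℝ) ^ (q + 2) / (q + 2) + (N : ℝ) ^ (q + 1) / 2) =
        ∑ i ∈ range q, c i * (N : ℝ) ^ (q - i) := by
    have hcast : ∑ d ∈ Icc 1 N, (d : ℝ) ^ (q + 1) =
        ((∑ k ∈ Ico 1 (N + 1), (k : ℚ) ^ (q + 1) : ℚ) : ℝ) := by
      rw [Ico_add_one_right_eq_Icc]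
      push_cast
      rfl
    rw [hcast, hfaulhaber]
    simp only [zero_add, bernoulli'_zero, bernoulli'_one, Nat.choose_zero_right,
      Nat.choose_one_right, add_assoc, Nat.reduceAdd, Nat.add_sub_add_right, Nat.sub_zero]
    push_cast
    rw [add_sub_assoc, add_eq_left.mpr (by field_simp; ring)]
    exact sum_congr rfl fun i _ => by ring
  rw [hsum, sum_mul]
  refine (abs_sum_le_sum_abs _ _).trans (sum_le_sum fun i _ => ?_)
  rw [abs_mul, abs_pow, Nat.abs_cast]
  gcongr
  · exact_mod_cast hN
  · omega

theorem pow_sub_pow_le_of_le {x y : ℝ} (hx : 0 ≤ x) (hxy : x ≤ y) (n : ℕ) :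
    y ^ n - x ^ n ≤ n * y ^ (n - 1) * (y - x) := by
  have h := abs_pow_sub_pow_le y x n
  rw [abs_of_nonneg (sub_nonneg.2 hxy), abs_of_nonneg (hx.trans hxy), abs_of_nonneg hx,
    max_eq_left hxy] at h
  linarith [le_abs_self (y ^ n - x ^ n)]

theorem abs_pow_mul_log_div_add_pow_sub_pow_div_le {x y : ℝ} (hx : 0 < x) (hxy : x ≤ y) {n : ℕ}
    (hn : n ≠ 0) :
    |y ^ n * log (x / y) + (y ^ n - x ^ n) / n| ≤ n * y ^ (n - 1) * (y - x) ^ 2 / x := by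
  have hy : 0 < y := hx.trans_le hxy
  have hn' : (0 : ℝ) < n := by positivity
  have hup := pow_sub_pow_le_of_le hx.le hxy n
  have hlow : n * x ^ (n - 1) * (y - x) ≤ y ^ n - x ^ n := by
    have h := pow_add_mul_le_add_pow hx.le (by linarith : 0 ≤ 2 * x + (y - x)) n
    rw [add_sub_cancel] at h
    linarith
  have hlog_le : log (x / y) ≤ -((y - x) / y) := by
    have h := log_le_sub_one_of_pos (div_pos hx hy)
    rwa [div_sub_one hy.ne', ← neg_sub, neg_div] at h
  have hlog_ge : -((y - x) / x) ≤ log (x / y) := by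
    have h := one_sub_inv_le_log_of_pos (div_pos hx hy)
    rwa [inv_div, one_sub_div hx.ne', ← neg_sub, neg_div] at h
  have hyn : y ^ n = y ^ (n - 1) * y := (pow_sub_one_mul hn y).symm
  have hxn : x ^ n = x ^ (n - 1) * x := (pow_sub_one_mul hn x).symm
  rw [abs_le]
  constructor
  · have hmul : y ^ n * -((y - x) / x) ≤ y ^ n * log (x / y) :=
      mul_le_mul_of_nonneg_left hlog_ge (by positivity)
    have hdiv : x ^ (n - 1) * (y - x) ≤ (y ^ n - x ^ n) / n := by
      rw [le_div_iff₀ hn']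
      linarith
    have hcombine :
        y ^ n * -((y - x) / x) + x ^ (n - 1) * (y - x) = -((y - x) * (y ^ n - x ^ n)) / x := by
      rw [hxn]
      field_simp
      ring
    have hsq : -(n * y ^ (n - 1) * (y - x) ^ 2) / x ≤ -((y - x) * (y ^ n - x ^ n)) / x := by
      refine div_le_div_of_nonneg_right ?_ hx.le
      nlinarith [mul_le_mul_of_nonneg_left hup (sub_nonneg.2 hxy)]
    rw [neg_div] at hsq
    linarith
  · have hmul : y ^ n * log (x / y) ≤ y ^ n * -((y - x) / y) :=
      mul_le_mul_of_nonneg_left hlog_le (by positivity)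
    have hdiv : (y ^ n - x ^ n) / n ≤ y ^ (n - 1) * (y - x) := by
      rw [div_le_iff₀ hn']
      linarith
    have hcancel : y ^ n * -((y - x) / y) = -(y ^ (n - 1) * (y - x)) := by
      rw [hyn]
      field_simp
    have hrhs : 0 ≤ n * y ^ (n - 1) * (y - x) ^ 2 / x := by positivity
    linarith

theorem pow_add_div_pow_le {t y : ℝ} (ht : 1 ≤ t) (hy : 0 ≤ y) (hyt : y ≤ t + 1) (m k : ℕ) :
    y ^ (m + k) / t ^ k ≤ 2 ^ k * y ^ m := by
  have hy_div : y / t ≤ 2 := by rw [div_le_iff₀ (by positivity)]; linarith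
  calc y ^ (m + k) / t ^ k = y ^ m * (y / t) ^ k := by rw [pow_add, div_pow, mul_div_assoc]
    _ ≤ y ^ m * 2 ^ k := by gcongr
    _ = 2 ^ k * y ^ m := mul_comm _ _

theorem sub_main_term_eq {x y t H R P c : ℝ} {a : ℕ} (ha : a ≠ 0) (hy : 0 < y) (ht : 0 < t)
    (hx : x = y ^ a) :
    x * H - R + t - P - (1 / a * x * log x + (c - 1 / a) * x) =
      x * (H - log t - c - 1 / (2 * t)) + (x * log (t / y) + (x - t ^ a) / a) +
        (x - t ^ a) / (2 * t) + (t - R) - (P - (t ^ a / a + t ^ (a - 1) / 2)) := by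
  have hta : t ^ a = t ^ (a - 1) * t := (pow_sub_one_mul ha t).symm
  rw [log_div ht.ne' hy.ne', hx, log_pow, hta]
  field_simp
  ring

theorem abs_sub_main_term_le {t y H R P c K C : ℝ} (q : ℕ) (ht : 1 ≤ t) (hty : t ≤ y)
    (hyt : y < t + 1) (hH : |H - log t - c - 1 / (2 * t)| ≤ K / t ^ 2) (hR : |t - R| ≤ y)
    (hP : |P - (t ^ (q + 2) / (q + 2) + t ^ (q + 1) / 2)| ≤ C * y ^ q) :
    |y ^ (q + 2) * H - R + t - P -
        (1 / (q + 2 : ℕ) * y ^ (q + 2) * log (y ^ (q + 2)) + (c - 1 / (q + 2 : ℕ)) * y ^ (q + 2))| ≤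
      (4 * K + 3 * (q + 2) + C) * y ^ q + y := by
  have hK : 0 ≤ K := by
    simpa using (le_div_iff₀ (by positivity)).1 ((abs_nonneg _).trans hH)
  have ht0 : 0 < t := by linarith
  have hy0 : 0 < y := by linarith
  have hscale1 := pow_add_div_pow_le ht hy0.le hyt.le q 1
  have hscale2 := pow_add_div_pow_le ht hy0.le hyt.le q 2
  simp only [pow_one] at hscale1
  have hharmonic : |y ^ (q + 2) * (H - log t - c - 1 / (2 * t))| ≤ 4 * K * y ^ q := by
    rw [abs_mul, abs_of_nonneg (by positivity)]
    calc _ ≤ y ^ (q + 2) * (K / t ^ 2) := by gcongr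
      _ = K * (y ^ (q + 2) / t ^ 2) := by ring
      _ ≤ K * (2 ^ 2 * y ^ q) := by gcongr
      _ = 4 * K * y ^ q := by ring
  have hlog : |y ^ (q + 2) * log (t / y) + (y ^ (q + 2) - t ^ (q + 2)) / ((q + 2 : ℕ) : ℝ)| ≤
      2 * (q + 2 : ℕ) * y ^ q := by
    refine (abs_pow_mul_log_div_add_pow_sub_pow_div_le (by positivity) hty (by omega)).trans ?_
    have hsq : (y - t) ^ 2 ≤ 1 := by nlinarith
    calc ((q + 2 : ℕ) : ℝ) * y ^ (q + 1) * (y - t) ^ 2 / t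
        ≤ ((q + 2 : ℕ) : ℝ) * y ^ (q + 1) * 1 / t := by gcongr
      _ = (q + 2 : ℕ) * (y ^ (q + 1) / t) := by ring
      _ ≤ (q + 2 : ℕ) * (2 * y ^ q) := by gcongr
      _ = 2 * (q + 2 : ℕ) * y ^ q := by ring
  have hpow : |(y ^ (q + 2) - t ^ (q + 2)) / (2 * t)| ≤ (q + 2 : ℕ) * y ^ q := by
    rw [abs_of_nonneg (div_nonneg (sub_nonneg.2 (by gcongr)) (by positivity)),
      div_le_iff₀ (by positivity)]
    calc y ^ (q + 2) - t ^ (q + 2) ≤ (q + 2 : ℕ) * y ^ (q + 1) * (y - t) :=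
          pow_sub_pow_le_of_le (by positivity) hty (q + 2)
      _ ≤ (q + 2 : ℕ) * y ^ (q + 1) * 1 := by gcongr; linarith
      _ = (q + 2 : ℕ) * y ^ q * y := by ring
      _ ≤ (q + 2 : ℕ) * y ^ q * (2 * t) := by gcongr; linarith
  rw [sub_main_term_eq (by omega) (by linarith) (by linarith) rfl,
    show q + 2 - 1 = q + 1 from rfl]
  push_cast at hlog hpow ⊢
  rw [abs_le] at hharmonic hlog hpow hR hP ⊢
  constructor <;> linarith [hharmonic.1, hharmonic.2, hlog.1, hlog.2, hpow.1, hpow.2, hR.1, hR.2,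
    hP.1, hP.2]

theorem exists_abs_sum_card_filter_divisors_pow_le_sub_le {a : ℕ} (ha : 2 ≤ a) :
    ∃ C, ∀ y : ℝ, 2 ≤ y →
      |∑ n ∈ Icc 1 ⌊y ^ a⌋₊, (#{d ∈ n.divisors | d ^ a ≤ n} : ℝ) -
          (1 / a * y ^ a * log (y ^ a) + (eulerMascheroniConstant - 1 / a) * y ^ a)| ≤
        C * y ^ (a - 2) + y := by
  obtain ⟨q, rfl⟩ := Nat.exists_eq_add_of_le' ha
  obtain ⟨C, hC0, hC⟩ := exists_abs_sum_Icc_pow_sub_le q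
  refine ⟨4 * 3 + 3 * (q + 2) + C, fun y hy => ?_⟩
  have hN2 : 2 ≤ ⌊y⌋₊ := Nat.le_floor (by exact_mod_cast hy)
  have hN1 : (1 : ℝ) ≤ ⌊y⌋₊ := by exact_mod_cast (by omega : 1 ≤ ⌊y⌋₊)
  have hNy : (⌊y⌋₊ : ℝ) ≤ y := Nat.floor_le (by linarith)
  rw [sum_card_filter_divisors_pow_le_floor_pow (by omega) (by linarith), Nat.add_sub_cancel,
    show q + 2 - 1 = q + 1 from rfl]
  refine abs_sub_main_term_le q hN1 hNy (Nat.lt_floor_add_one y) ?_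
    ((abs_sub_sum_div_sub_floor_div_le (by positivity) _).trans hNy)
    ((hC _ (by omega)).trans (by gcongr))
  simpa only [harmonic_eq_sum_Icc, Rat.cast_sum, Rat.cast_inv, Rat.cast_natCast] using
    abs_harmonic_sub_log_sub_eulerMascheroniConstant_le hN2

theorem rpow_inv_natCast_pow_sub {x : ℝ} (hx : 0 ≤ x) {a b : ℕ} (ha : a ≠ 0) (hb : b ≤ a) :
    (x ^ (a⁻¹ : ℝ)) ^ (a - b) = x ^ (1 - b / a : ℝ) := by
  rw [← rpow_natCast, ← rpow_mul hx, Nat.cast_sub hb]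
  congr 1
  field_simp

theorem stmt_12 (a : ℕ) (ha : 3 ≤ a) (ε : ℝ) (hε : 0 < ε) :
    (fun x : ℝ =>
        (∑ n ∈ Finset.Icc 1 ⌊x⌋₊, ((n.divisors.filter (fun d => d ^ a ≤ n)).card : ℝ)) -
          ((1 / (a : ℝ)) * x * Real.log x +
            (Real.eulerMascheroniConstant - 1 / (a : ℝ)) * x)) =O[atTop]
      fun x : ℝ => x ^ (1 - 2 / (a : ℝ)) + x ^ ((2 : ℝ) / 3 + ε) := by
  obtain ⟨C, hC⟩ := exists_abs_sum_card_filter_divisors_pow_le_sub_le (by omega : 2 ≤ a)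
  refine Asymptotics.IsBigO.of_bound (|C| + 1) ?_
  filter_upwards [eventually_ge_atTop ((2 : ℝ) ^ a)] with x hx
  have hx1 : 1 ≤ x := (one_le_pow₀ one_le_two).trans hx
  set y := x ^ (a : ℝ)⁻¹
  have hy : 2 ≤ y := by
    rw [← pow_rpow_inv_natCast zero_le_two (by omega : a ≠ 0)]
    exact rpow_le_rpow (by positivity) hx (by positivity)
  have hy_le : y ≤ x ^ ((2 : ℝ) / 3 + ε) := by
    refine rpow_le_rpow_of_exponent_le hx1 ?_
    have : (a : ℝ)⁻¹ ≤ 3⁻¹ := inv_anti₀ (by norm_num) (by exact_mod_cast ha)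
    linarith
  have hbound := hC y hy
  rw [rpow_inv_natCast_pow (by linarith) (by omega),
    rpow_inv_natCast_pow_sub (by linarith) (by omega) (by omega), Nat.cast_ofNat] at hbound
  have hrpow : 0 ≤ x ^ (1 - 2 / (a : ℝ)) := by positivity
  rw [norm_eq_abs, norm_of_nonneg (by positivity)]
  calc _ ≤ C * x ^ (1 - 2 / (a : ℝ)) + y := hbound
    _ ≤ (|C| + 1) * (x ^ (1 - 2 / (a : ℝ)) + x ^ ((2 : ℝ) / 3 + ε)) := by
      nlinarith [le_abs_self C, abs_nonneg C]
end

section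
/- For every real x ≥ 1: Σ_{n ≤ x} τ(n) = x log x + (2γ - 1) x - 2·Σ_{d ≤ √x} ψ(x/d) + O(1), where ψ(t) = t - ⌊t⌋ - 1/2, τ is the divisor function, and γ is the Euler–Mascheroni constant. -/
set_option maxHeartbeats 1000000

open Finset Real Filter Topology

lemma log_succ_div_le (n : ℕ) (hn : 1 ≤ n) :
    Real.log (((n:ℝ)+1)/n) ≤ (2*(n:ℝ)+1)/(2*n*(n+1)) := by
  have hn' : (1:ℝ) ≤ n := by exact_mod_cast hn
  set a : ℝ := (n:ℝ) with ha
  set t : ℝ := (2*a+1)/(2*a*(a+1)) with ht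
  have htpos : 0 ≤ t := by positivity
  rw [Real.log_le_iff_le_exp (by positivity)]
  refine le_trans ?_ (Real.quadratic_le_exp_of_nonneg htpos)
  have e : (1 + t + t^2/2) - (a+1)/a = 1/(8*a^2*(a+1)^2) := by
    rw [ht]; field_simp; ring
  have : (0:ℝ) < 1/(8*a^2*(a+1)^2) := by positivity
  linarith

lemma le_log_succ_div (n : ℕ) (hn : 1 ≤ n) :
    2/(2*(n:ℝ)+1) ≤ Real.log (((n:ℝ)+1)/n) := by
  have hn' : (1:ℝ) ≤ n := by exact_mod_cast hn
  set a : ℝ := (n:ℝ) with ha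
  set t : ℝ := 2/(2*a+1) with ht
  have ht0 : 0 ≤ t := by positivity
  have ht1 : t ≤ 1 := by
    rw [ht, div_le_one (by positivity)]; linarith
  have hb := Real.exp_bound (x := t) (by rw [abs_of_nonneg ht0]; exact ht1) (n := 3) (by norm_num)
  rw [abs_of_nonneg ht0] at hb
  have hsum : ∑ m ∈ Finset.range 3, t ^ m / m.factorial = 1 + t + t^2/2 := by
    simp [Finset.sum_range_succ, Nat.factorial]
  rw [hsum] at hb
  have hexp : Real.exp t ≤ 1 + t + t^2/2 + t^3 * (2/9) := by
    have := (abs_le.mp hb).2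
    norm_num [Nat.factorial] at this ⊢
    linarith
  rw [Real.le_log_iff_exp_le (by positivity)]
  refine hexp.trans ?_
  have e : (a+1)/a - (1 + t + t^2/2 + t^3*(2/9)) = (2*(2*a+1)+16)/(9*(2*a+1)^3*(2*a)) := by
    rw [ht]; field_simp; ring
  have : (0:ℝ) < (2*(2*a+1)+16)/(9*(2*a+1)^3*(2*a)) := by positivity
  linarith


lemma half_tendsto (c : ℝ) : Tendsto (fun m : ℕ => 1/(2*((m:ℝ)+c))) atTop (𝓝 0) := by
  simp only [one_div]
  exact Tendsto.comp tendsto_inv_atTop_zero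
    ((Filter.tendsto_atTop_add_const_right atTop c tendsto_natCast_atTop_atTop).const_mul_atTop
      two_pos)

lemma harmonic_sub_le (n : ℕ) (hn : 1 ≤ n) :
    (harmonic n : ℝ) - Real.log n - Real.eulerMascheroniConstant ≤ 1/(2*(n:ℝ)) := by
  set f : ℕ → ℝ := fun m => (harmonic m : ℝ) - Real.log m - 1/(2*(m:ℝ)) with hf
  have hstep : ∀ m, 1 ≤ m → f m ≤ f (m+1) := by
    intro m hm
    have hm' : (1:ℝ) ≤ (m:ℝ) := by exact_mod_cast hm
    have hh : (harmonic (m+1) : ℝ) = harmonic m + 1/((m:ℝ)+1) := by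
      rw [harmonic_succ]; push_cast; ring
    have hlog : Real.log ((m:ℝ)+1) - Real.log m = Real.log (((m:ℝ)+1)/m) := by
      rw [Real.log_div (by positivity) (by positivity)]
    have h1 := log_succ_div_le m hm
    have e : (2*(m:ℝ)+1)/(2*m*(m+1)) = 1/((m:ℝ)+1) + (1/(2*(m:ℝ)) - 1/(2*((m:ℝ)+1))) := by
      field_simp; ring
    simp only [hf]
    push_cast
    rw [hh]
    have : Real.log ((m:ℝ)+1) = Real.log m + Real.log (((m:ℝ)+1)/m) := by rw [← hlog]; ring
    rw [this]
    rw [e] at h1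
    linarith
  have hmono : ∀ m, n ≤ m → f n ≤ f m := by
    intro m hm
    induction m, hm using Nat.le_induction with
    | base => exact le_refl _
    | succ m hm ih => exact ih.trans (hstep m (hn.trans hm))
  have htend : Tendsto f atTop (𝓝 (Real.eulerMascheroniConstant - 0)) := by
    apply Tendsto.sub Real.tendsto_harmonic_sub_log
    simpa using half_tendsto 0
  rw [sub_zero] at htend
  have : f n ≤ Real.eulerMascheroniConstant :=
    ge_of_tendsto htend (Filter.eventually_atTop.mpr ⟨n, hmono⟩)
  simp only [hf] at this
  linarith

lemma le_harmonic_sub (n : ℕ) (hn : 1 ≤ n) :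
    1/(2*((n:ℝ)+1)) ≤ (harmonic n : ℝ) - Real.log n - Real.eulerMascheroniConstant := by
  set g : ℕ → ℝ := fun m => (harmonic m : ℝ) - Real.log m - 1/(2*((m:ℝ)+1)) with hg
  have hstep : ∀ m, 1 ≤ m → g (m+1) ≤ g m := by
    intro m hm
    have hm' : (1:ℝ) ≤ (m:ℝ) := by exact_mod_cast hm
    have hh : (harmonic (m+1) : ℝ) = harmonic m + 1/((m:ℝ)+1) := by
      rw [harmonic_succ]; push_cast; ring
    have h1 := le_log_succ_div m hm
    have e : 2/(2*(m:ℝ)+1) - (1/((m:ℝ)+1) + (1/(2*((m:ℝ)+1)) - 1/(2*((m:ℝ)+2))))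
        = 3/(2*((m:ℝ)+1)*((m:ℝ)+2)*(2*(m:ℝ)+1)) := by
      field_simp; ring
    have hpos : (0:ℝ) < 3/(2*((m:ℝ)+1)*((m:ℝ)+2)*(2*(m:ℝ)+1)) := by positivity
    have hlog : Real.log ((m:ℝ)+1) = Real.log m + Real.log (((m:ℝ)+1)/m) := by
      rw [Real.log_div (by positivity) (by positivity)]; ring
    simp only [hg]
    push_cast
    rw [hh, hlog]
    have e2 : (m:ℝ)+1+1 = (m:ℝ)+2 := by ring
    rw [e2]
    linarith
  have hanti : ∀ m, n ≤ m → g m ≤ g n := by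
    intro m hm
    induction m, hm using Nat.le_induction with
    | base => exact le_refl _
    | succ m hm ih => exact (hstep m (hn.trans hm)).trans ih
  have htend : Tendsto g atTop (𝓝 (Real.eulerMascheroniConstant - 0)) := by
    apply Tendsto.sub Real.tendsto_harmonic_sub_log
    exact half_tendsto 1
  rw [sub_zero] at htend
  have : Real.eulerMascheroniConstant ≤ g n :=
    le_of_tendsto htend (Filter.eventually_atTop.mpr ⟨n, hanti⟩)
  simp only [hg] at this
  linarith

lemma hyperbola (x : ℝ) (hx : 1 ≤ x) :
    (∑ n ∈ Icc 1 ⌊x⌋₊, n.divisors.card) + ⌊Real.sqrt x⌋₊ * ⌊Real.sqrt x⌋₊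
      = 2 * ∑ a ∈ Icc 1 ⌊Real.sqrt x⌋₊, ⌊x/(a:ℝ)⌋₊ := by
  have hx0 : (0:ℝ) ≤ x := by linarith
  set N := ⌊x⌋₊ with hN
  set D := ⌊Real.sqrt x⌋₊ with hD
  have hsx : 1 ≤ Real.sqrt x := by
    rw [show (1:ℝ) = Real.sqrt 1 by simp]; exact Real.sqrt_le_sqrt hx
  have hDle : (D:ℝ) ≤ Real.sqrt x := Nat.floor_le (by positivity)
  have hDsq : ((D:ℝ))*(D:ℝ) ≤ x := by
    have := mul_le_mul hDle hDle (by positivity) (Real.sqrt_nonneg x)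
    rwa [Real.mul_self_sqrt hx0] at this
  have hDup : x < ((D:ℝ)+1)*((D:ℝ)+1) := by
    have h1 : Real.sqrt x < (D:ℝ)+1 := by
      have := Nat.lt_floor_add_one (Real.sqrt x); push_cast at this ⊢; linarith
    calc x = Real.sqrt x * Real.sqrt x := (Real.mul_self_sqrt hx0).symm
    _ < ((D:ℝ)+1)*((D:ℝ)+1) :=
        mul_lt_mul' h1.le h1 (Real.sqrt_nonneg x) (by positivity)
  have hDN : D ≤ N := by
    apply Nat.floor_mono
    have h2 : Real.sqrt x ≤ Real.sqrt (x*x) := Real.sqrt_le_sqrt (by nlinarith)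
    rwa [Real.sqrt_mul_self hx0] at h2
  have hNx : (N:ℝ) ≤ x := Nat.floor_le hx0
  have keyAB : ∀ a b : ℕ, 1 ≤ a → (a*b ≤ N ↔ b ≤ ⌊x/(a:ℝ)⌋₊) := by
    intro a b ha
    have ha' : (0:ℝ) < a := by exact_mod_cast ha
    rw [hN, Nat.le_floor_iff hx0, Nat.le_floor_iff (by positivity : (0:ℝ) ≤ x/(a:ℝ)), le_div_iff₀ ha']
    push_cast
    rw [mul_comm]
  have hfloorle : ∀ a : ℕ, 1 ≤ a → ⌊x/(a:ℝ)⌋₊ ≤ N := by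
    intro a ha
    apply Nat.floor_mono
    apply div_le_self hx0
    exact_mod_cast ha
  set T := (Icc 1 N ×ˢ Icc 1 N).filter (fun p => p.1 * p.2 ≤ N) with hT
  set A := T.filter (fun p => p.1 ≤ D) with hA
  set B := T.filter (fun p => p.2 ≤ D) with hB
  have memT : ∀ p : ℕ × ℕ, p ∈ T ↔ (1 ≤ p.1 ∧ p.1 ≤ N) ∧ (1 ≤ p.2 ∧ p.2 ≤ N) ∧ p.1 * p.2 ≤ N := by
    intro p
    simp only [hT, Finset.mem_filter, Finset.mem_product, Finset.mem_Icc]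
    tauto
  -- step 1
  have step1 : ∑ n ∈ Icc 1 N, n.divisors.card = T.card := by
    rw [Finset.card_eq_sum_card_fiberwise (f := fun p => p.1 * p.2) (t := Icc 1 N)]
    · apply Finset.sum_congr rfl
      intro n hn
      rw [Finset.mem_Icc] at hn
      apply Finset.card_nbij' (i := fun d => ((d, n/d) : ℕ × ℕ)) (j := fun p => p.1)
      · intro d hd
        rw [Finset.mem_coe, Nat.mem_divisors] at hd
        obtain ⟨hdvd, hn0⟩ := hd
        have hd1 : 1 ≤ d := Nat.one_le_iff_ne_zero.mpr (by rintro rfl; simp at hdvd; omega)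
        have hdn : d ≤ n := Nat.le_of_dvd (by omega) hdvd
        have hq1 : 1 ≤ n / d := (Nat.one_le_div_iff (by omega)).mpr hdn
        have hqn : n / d ≤ n := Nat.div_le_self n d
        have hmul : d * (n / d) = n := Nat.mul_div_cancel' hdvd
        rw [Finset.mem_coe, Finset.mem_filter, memT]
        exact ⟨⟨⟨hd1, hdn.trans hn.2⟩, ⟨hq1, hqn.trans hn.2⟩,
          by show d * (n/d) ≤ N; rw [hmul]; exact hn.2⟩, hmul⟩
      · intro p hp
        rw [Finset.mem_coe, Finset.mem_filter, memT] at hp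
        obtain ⟨⟨⟨h11, h12⟩, ⟨h21, h22⟩, h3⟩, he⟩ := hp
        rw [Finset.mem_coe, Nat.mem_divisors]
        exact ⟨⟨p.2, he.symm⟩, by rw [← he]; exact Nat.mul_ne_zero (by omega) (by omega)⟩
      · intro d hd
        rfl
      · intro p hp
        rw [Finset.mem_coe, Finset.mem_filter, memT] at hp
        have h1 : 1 ≤ p.1 := hp.1.1.1
        have h2 : n / p.1 = p.2 := by
          rw [← hp.2, Nat.mul_div_cancel_left _ (by omega)]
        exact Prod.ext rfl h2
    · intro p hp
      rw [Finset.mem_coe, memT] at hp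
      rw [Finset.mem_coe, Finset.mem_Icc]
      exact ⟨Nat.one_le_iff_ne_zero.mpr (Nat.mul_ne_zero (by omega) (by omega)), hp.2.2⟩
  -- card A
  have cardA : A.card = ∑ a ∈ Icc 1 D, ⌊x/(a:ℝ)⌋₊ := by
    rw [Finset.card_eq_sum_card_fiberwise (f := fun p => p.1) (t := Icc 1 D)]
    · apply Finset.sum_congr rfl
      intro a ha
      rw [Finset.mem_Icc] at ha
      have hfiber : A.filter (fun p => p.1 = a) = {a} ×ˢ Icc 1 ⌊x/(a:ℝ)⌋₊ := by
        ext p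
        rw [Finset.mem_filter, hA, Finset.mem_filter, memT, Finset.mem_product,
          Finset.mem_singleton, Finset.mem_Icc]
        constructor
        · rintro ⟨⟨⟨h1, h2⟩, hD1⟩, h3⟩
          refine ⟨h3, h2.1.1, ?_⟩
          rw [← keyAB a p.2 ha.1, ← h3]
          exact h2.2
        · rintro ⟨h3, h1b, h2b⟩
          refine ⟨⟨⟨⟨by omega, by omega⟩, ⟨h1b, (h2b.trans (hfloorle a ha.1))⟩, ?_⟩, by omega⟩, h3⟩
          rw [h3, keyAB a p.2 ha.1]
          exact h2b
      rw [hfiber]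
      simp [Nat.card_Icc]
    · intro p hp
      rw [hA, Finset.mem_coe, Finset.mem_filter, memT] at hp
      rw [Finset.mem_coe, Finset.mem_Icc]
      exact ⟨hp.1.1.1, hp.2⟩
  -- card B = card A
  have cardB : B.card = A.card := by
    apply Finset.card_nbij' (i := Prod.swap) (j := Prod.swap)
    · intro p hp
      rw [hB, Finset.mem_coe, Finset.mem_filter, memT] at hp
      rw [hA, Finset.mem_coe, Finset.mem_filter, memT]
      refine ⟨⟨hp.1.2.1, hp.1.1, ?_⟩, hp.2⟩
      rw [Prod.fst_swap, Prod.snd_swap, Nat.mul_comm]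
      exact hp.1.2.2
    · intro p hp
      rw [hA, Finset.mem_coe, Finset.mem_filter, memT] at hp
      rw [hB, Finset.mem_coe, Finset.mem_filter, memT]
      refine ⟨⟨hp.1.2.1, hp.1.1, ?_⟩, hp.2⟩
      rw [Prod.fst_swap, Prod.snd_swap, Nat.mul_comm]
      exact hp.1.2.2
    · intro p _; exact Prod.swap_swap p
    · intro p _; exact Prod.swap_swap p
  -- union
  have hUnion : A ∪ B = T := by
    rw [hA, hB, ← Finset.filter_or]
    apply Finset.filter_true_of_mem
    intro p hp
    rw [memT] at hp
    by_contra hcon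
    push_neg at hcon
    have h1 : D + 1 ≤ p.1 := hcon.1
    have h2 : D + 1 ≤ p.2 := hcon.2
    have h3 : (D+1)*(D+1) ≤ N := le_trans (Nat.mul_le_mul h1 h2) hp.2.2
    have h4 : (((D+1)*(D+1) : ℕ) : ℝ) ≤ (N:ℝ) := Nat.cast_le.mpr h3
    push_cast at h4
    linarith
  -- intersection
  have hInter : A ∩ B = Icc 1 D ×ˢ Icc 1 D := by
    have hDDN : D * D ≤ N := by
      rw [hN, Nat.le_floor_iff hx0]
      push_cast
      exact hDsq
    rw [hA, hB, ← Finset.filter_and]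
    ext p
    rw [Finset.mem_filter, memT, Finset.mem_product, Finset.mem_Icc, Finset.mem_Icc]
    constructor
    · rintro ⟨⟨ha, hb, hab⟩, h1, h2⟩
      exact ⟨⟨ha.1, h1⟩, hb.1, h2⟩
    · rintro ⟨⟨ha1, ha2⟩, hb1, hb2⟩
      have : p.1 * p.2 ≤ N := le_trans (Nat.mul_le_mul ha2 hb2) hDDN
      exact ⟨⟨⟨ha1, le_trans ha2 hDN⟩, ⟨hb1, le_trans hb2 hDN⟩, this⟩, ha2, hb2⟩
  have hcard := Finset.card_union_add_card_inter A B
  rw [hUnion, hInter, cardA, cardB, cardA] at hcard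
  rw [step1]
  have hprod : (Icc 1 D ×ˢ Icc 1 D).card = D * D := by
    rw [Finset.card_product, Nat.card_Icc, Nat.add_sub_cancel]
  rw [hprod] at hcard
  omega

lemma key_ineq (D : ℕ) (hD : 1 ≤ D) (x H : ℝ)
    (h1 : (D:ℝ)*(D:ℝ) ≤ x) (h2 : x ≤ ((D:ℝ)+1)*((D:ℝ)+1))
    (ht1 : Real.log D + Real.eulerMascheroniConstant + 1/(2*((D:ℝ)+1)) ≤ H)
    (ht2 : H ≤ Real.log D + Real.eulerMascheroniConstant + 1/(2*(D:ℝ))) :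
    |2*x*H - (D:ℝ) - (D:ℝ)*(D:ℝ) -
      (x*Real.log x + (2*Real.eulerMascheroniConstant - 1)*x)| ≤ 10 := by
  have hgen : ∃ γ : ℝ, γ = Real.eulerMascheroniConstant := ⟨_, rfl⟩
  obtain ⟨γ, hγ⟩ := hgen
  rw [← hγ] at ht1 ht2 ⊢
  set d : ℝ := (D:ℝ) with hdd
  have hd1 : (1:ℝ) ≤ d := by rw [hdd]; exact_mod_cast hD
  have hd0 : (0:ℝ) < d := by linarith
  have hx1 : (1:ℝ) ≤ x := by nlinarith
  have hx0 : (0:ℝ) < x := by linarith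
  have hdel1 : 0 ≤ x - d*d := by linarith
  have hdel2 : x - d*d ≤ 3*d := by nlinarith
  set L : ℝ := Real.log (d*d/x) with hL
  have hxL : x*L = 2*x*Real.log d - x*Real.log x := by
    rw [hL, Real.log_div (by positivity) (by positivity), Real.log_mul (ne_of_gt hd0) (ne_of_gt hd0)]
    ring
  have hL1 : L ≤ d*d/x - 1 := Real.log_le_sub_one_of_pos (by positivity)
  have hM1 : Real.log (x/(d*d)) ≤ x/(d*d) - 1 := Real.log_le_sub_one_of_pos (by positivity)
  have hML : Real.log (x/(d*d)) = -L := by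
    rw [hL, ← Real.log_inv]
    congr 1
    field_simp
  rw [hML] at hM1
  -- multiply by x
  have hxL1 : x*L ≤ d*d - x := by
    have := mul_le_mul_of_nonneg_left hL1 (le_of_lt hx0)
    have e : x*(d*d/x - 1) = d*d - x := by field_simp
    linarith [this, e]
  have hxL2 : x - x^2/(d*d) ≤ x*L := by
    have := mul_le_mul_of_nonneg_left hM1 (le_of_lt hx0)
    have e : x*(x/(d*d) - 1) = x^2/(d*d) - x := by field_simp
    nlinarith [this, e]
  -- quadratic bound
  have hq : x^2/(d*d)*(d*d) = x^2 := div_mul_cancel₀ _ (by positivity)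
  have B1 : x - x^2/(d*d) ≥ -(x - d*d) - 9 := by
    have h9 : (3*d - (x - d*d))*(3*d + (x - d*d)) ≥ 0 :=
      mul_nonneg (by linarith) (by nlinarith)
    nlinarith [hq, h9, mul_pos hd0 hd0]
  have B2 : x/(d+1) - d ≥ -1 := by
    have : (d-1)*(d+1) ≤ x := by nlinarith
    have h := (le_div_iff₀ (by positivity : (0:ℝ) < d+1)).mpr this
    linarith
  have B3 : x/d ≤ d + 3 := by
    rw [div_le_iff₀ hd0]; nlinarith
  -- expand products with H bounds
  have hub : 2*x*H ≤ 2*x*Real.log d + 2*γ*x + x/d := by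
    have := mul_le_mul_of_nonneg_left ht2 (by positivity : (0:ℝ) ≤ 2*x)
    have e : 2*x*(Real.log d + γ + 1/(2*d)) = 2*x*Real.log d + 2*γ*x + x/d := by
      field_simp
    linarith [this, e]
  have hlb : 2*x*Real.log d + 2*γ*x + x/(d+1) ≤ 2*x*H := by
    have := mul_le_mul_of_nonneg_left ht1 (by positivity : (0:ℝ) ≤ 2*x)
    have e : 2*x*(Real.log d + γ + 1/(2*(d+1))) = 2*x*Real.log d + 2*γ*x + x/(d+1) := by
      field_simp
    linarith [this, e]
  rw [abs_le]
  constructor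
  · -- lower:  -10 ≤ E
    nlinarith [hlb, hxL2, B1, B2, hxL]
  · -- upper: E ≤ 10
    nlinarith [hub, hxL1, B3, hxL]

theorem stmt_18 :
    ∃ C : ℝ, ∀ x : ℝ, 1 ≤ x →
      |(∑ n ∈ Finset.Icc 1 ⌊x⌋₊, (n.divisors.card : ℝ)) -
          (x * Real.log x + (2 * Real.eulerMascheroniConstant - 1) * x -
            2 * ∑ d ∈ Finset.Icc 1 ⌊Real.sqrt x⌋₊, psi (x / (d : ℝ)))| ≤ C := by
  refine ⟨10, fun x hx => ?_⟩
  have hx0 : (0:ℝ) ≤ x := by linarith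
  set D := ⌊Real.sqrt x⌋₊ with hD
  have hsx : 1 ≤ Real.sqrt x := by
    rw [show (1:ℝ) = Real.sqrt 1 by simp]; exact Real.sqrt_le_sqrt hx
  have hD1 : 1 ≤ D := by
    rw [hD]
    exact Nat.le_floor (by exact_mod_cast hsx)
  have hDle : (D:ℝ) ≤ Real.sqrt x := Nat.floor_le (by positivity)
  have hDsq : ((D:ℝ))*(D:ℝ) ≤ x := by
    have := mul_le_mul hDle hDle (by positivity) (Real.sqrt_nonneg x)
    rwa [Real.mul_self_sqrt hx0] at this
  have hDup : x ≤ ((D:ℝ)+1)*((D:ℝ)+1) := by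
    have h1 : Real.sqrt x < (D:ℝ)+1 := by
      have := Nat.lt_floor_add_one (Real.sqrt x); push_cast at this ⊢; linarith
    have : x < ((D:ℝ)+1)*((D:ℝ)+1) := by
      calc x = Real.sqrt x * Real.sqrt x := (Real.mul_self_sqrt hx0).symm
      _ < ((D:ℝ)+1)*((D:ℝ)+1) :=
          mul_lt_mul' h1.le h1 (Real.sqrt_nonneg x) (by positivity)
    linarith
  have hhyp := hyperbola x hx
  rw [← hD] at hhyp
  have hcast : (∑ n ∈ Finset.Icc 1 ⌊x⌋₊, (n.divisors.card:ℝ)) + (D:ℝ)*(D:ℝ)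
      = 2 * ∑ a ∈ Finset.Icc 1 D, ((⌊x/(a:ℝ)⌋₊ : ℕ):ℝ) := by
    exact_mod_cast congrArg (Nat.cast : ℕ → ℝ) hhyp
  have hfloor : ∀ a ∈ Finset.Icc 1 D, ((⌊x/(a:ℝ)⌋₊:ℕ):ℝ) = x/(a:ℝ) - psi (x/(a:ℝ)) - 1/2 := by
    intro a ha
    rw [Finset.mem_Icc] at ha
    have ha0 : (0:ℝ) < a := by exact_mod_cast ha.1
    rw [natCast_floor_eq_intCast_floor (by positivity)]
    simp only [psi]
    ring
  rw [Finset.sum_congr rfl hfloor] at hcast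
  have hsplit : ∑ a ∈ Finset.Icc 1 D, (x/(a:ℝ) - psi (x/(a:ℝ)) - 1/2)
      = x * (harmonic D : ℝ) - (∑ a ∈ Finset.Icc 1 D, psi (x/(a:ℝ))) - (D:ℝ)/2 := by
    rw [Finset.sum_sub_distrib, Finset.sum_sub_distrib]
    congr 1
    congr 1
    · rw [harmonic_eq_sum_Icc]
      push_cast
      rw [Finset.mul_sum]
      apply Finset.sum_congr rfl
      intro a _
      rw [div_eq_mul_inv]
    · rw [Finset.sum_const, Nat.card_Icc]
      simp
      ring
  rw [hsplit] at hcast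
  have hH1 := harmonic_sub_le D hD1
  have hH2 := le_harmonic_sub D hD1
  have hkey := key_ineq D hD1 x ((harmonic D : ℝ)) hDsq hDup (by push_cast at hH2 ⊢; linarith)
    (by push_cast at hH1 ⊢; linarith)
  have heq : (∑ n ∈ Finset.Icc 1 ⌊x⌋₊, (n.divisors.card : ℝ)) -
          (x * Real.log x + (2 * Real.eulerMascheroniConstant - 1) * x -
            2 * ∑ a ∈ Finset.Icc 1 D, psi (x / (a : ℝ)))
      = 2*x*((harmonic D : ℝ)) - (D:ℝ) - (D:ℝ)*(D:ℝ) -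
          (x*Real.log x + (2*Real.eulerMascheroniConstant - 1)*x) := by
    linarith
  rw [heq]
  exact hkey
end
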